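/- Let X be a topological space, K a group of homeomorphisms of X, and suppose a group G acts on X via an embedding into K such that there is a nonempty open set U ⊆ X with g(U) ∩ h(U) = ∅ for all distinct g, h ∈ G (a demonstrative action). If furthermore K contains, for every nonempty open V ⊆ X, an isomorphic copy of some fixed group H supported on V, then the restricted direct sum ⊕_{g∈G} H embeds into K in such a way that G normalizes the image, permuting the direct summands according to left translation; consequently H ≀ G embeds into K. -/

import Mathlib

/-- The group of self-homeomorphisms of a topological space. -/
instance homeoGroup (X : Type*) [TopologicalSpace X] : Group (X ≃ₜ X) where
  mul f g := g.trans f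
  one := Homeomorph.refl X
  inv := Homeomorph.symm
  mul_assoc f g h := rfl
  one_mul f := rfl
  mul_one f := rfl
  inv_mul_cancel f := by ext x; exact f.symm_apply_apply x

/-- The restricted direct product `⊕_{g ∈ G} K`: functions `G → K` with
all but finitely many values trivial, as a subgroup of `∀ g : G, K`. -/
def restrictedPi (G : Type*) (K : Type*) [Group K] : Subgroup (∀ _ : G, K) where
  carrier := {f | {g | f g ≠ 1}.Finite}
  one_mem' := by simp
  mul_mem' := by
    intro a b ha hb
    refine (ha.union hb).subset ?_
    intro g hg
    by_contra hc
    simp only [Set.mem_union, Set.mem_setOf_eq, not_or, not_not] at hc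
    simp [Set.mem_setOf_eq, Pi.mul_apply, hc.1, hc.2] at hg
  inv_mem' := by
    intro a ha
    simpa using ha

/-- `G` acts on `⊕_{g ∈ G} K` by left translation of coordinates. -/
def restrictedLeftAut (G K : Type*) [Group G] [Group K] :
    G →* MulAut (restrictedPi G K) where
  toFun g :=
    { toFun := fun f => ⟨fun x => (f : ∀ _ : G, K) (g⁻¹ * x), by
        refine (f.2.image (fun y => g * y)).subset ?_
        intro x hx
        exact ⟨g⁻¹ * x, hx, by group⟩⟩
      invFun := fun f => ⟨fun x => (f : ∀ _ : G, K) (g * x), by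
        refine (f.2.image (fun y => g⁻¹ * y)).subset ?_
        intro x hx
        exact ⟨g * x, hx, by group⟩⟩
      left_inv := fun f => by ext x; simp
      right_inv := fun f => by ext x; simp
      map_mul' := fun f f' => rfl }
  map_one' := by ext f x; simp
  map_mul' := fun g g' => by ext f x; simp [mul_assoc]

/-- The restricted wreath product `K ≀ G = (⊕_{g ∈ G} K) ⋊ G`. -/
def RestrictedWreath (K G : Type*) [Group K] [Group G] :=
  (restrictedPi G K) ⋊[restrictedLeftAut G K] G

instance (K G : Type*) [Group K] [Group G] : Group (RestrictedWreath K G) := by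
  unfold RestrictedWreath; infer_instance

/-!
Let `ρ` be a copy of `H` supported on `U`. Conjugating it by `φ g` gives a copy supported on the
translate `g U`; since these translates are pairwise disjoint, the copies commute with each other,
so a finitely supported `f : G → H` can be sent to the (finite, order-independent) product of the
`g`-th copy evaluated at `f g`. On `g U` this product acts as the `g`-th copy alone, which gives
injectivity, and conjugation by `φ g` shifts the copies, which is the left translation of
coordinates. Finally the image of `⊕ H` preserves `U` while `φ g` moves `U` off itself for `g ≠ 1`,
so the two pieces of `(⊕ H) ⋊ G` meet trivially and the induced map on the wreath product is
injective.
-/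

open Function

theorem Finset.noncommProd_subset {ι M : Type*} [Monoid M] [DecidableEq ι] {s t : Finset ι}
    (hst : s ⊆ t) (F : ι → M) (comm : (t : Set ι).Pairwise (Commute on F))
    (hF : ∀ i ∈ t, i ∉ s → F i = 1) :
    s.noncommProd F (comm.mono (coe_subset.2 hst)) = t.noncommProd F comm := by
  have hrest : (t \ s).noncommProd F (comm.mono (coe_subset.2 sdiff_subset)) = 1 :=
    (noncommProd_eq_pow_card _ _ _ 1 fun i hi =>
      hF i (mem_sdiff.1 hi).1 (mem_sdiff.1 hi).2).trans (one_pow _)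
  calc s.noncommProd F _
      = (s ∪ t \ s).noncommProd F (by rwa [union_sdiff_of_subset hst]) := by
        rw [noncommProd_union_of_disjoint disjoint_sdiff, hrest, mul_one]
    _ = t.noncommProd F comm :=
        noncommProd_congr (union_sdiff_of_subset hst) (fun _ _ => rfl) _

theorem Finset.noncommProd_map {ι κ M : Type*} [Monoid M] (s : Finset ι) (e : ι ↪ κ) (F : κ → M)
    (comm : (s.map e : Set κ).Pairwise (Commute on F)) :
    (s.map e).noncommProd F comm =
      s.noncommProd (F ∘ e) fun _ hi _ hj hij =>
        comm (mem_map_of_mem e hi) (mem_map_of_mem e hj) (e.injective.ne hij) := by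
  simp only [noncommProd, map_val, Multiset.map_map]

theorem SemidirectProduct.lift_injective {N G M : Type*} [Group N] [Group G] [Group M]
    {φ : G →* MulAut N} (fn : N →* M) (fg : G →* M)
    (h : ∀ g, fn.comp (φ g).toMonoidHom = (MulAut.conj (fg g)).toMonoidHom.comp fn)
    (hfn : Injective fn) (hrange : ∀ n g, fn n = fg g → g = 1) :
    Injective (lift fn fg h) := by
  refine (injective_iff_map_eq_one _).2 fun w hw => ?_
  have hw' : fn w.left * fg w.right = 1 := hw
  have hright : w.right = 1 :=
    inv_eq_one.1 (hrange _ _ ((eq_inv_of_mul_eq_one_left hw').trans (map_inv fg _).symm))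
  rw [hright, map_one, mul_one, ← map_one fn] at hw'
  exact SemidirectProduct.ext (hfn hw') hright

namespace Homeomorph

variable {X : Type*} [TopologicalSpace X] {a b : X ≃ₜ X} {A B : Set X}

def SupportedOn (a : X ≃ₜ X) (A : Set X) : Prop := ∀ x ∉ A, a x = x

theorem SupportedOn.apply_mem (ha : SupportedOn a A) {x : X} (hx : x ∈ A) : a x ∈ A := by
  by_contra hax
  rw [a.injective (ha _ hax)] at hax
  exact hax hx

theorem SupportedOn.commute (ha : SupportedOn a A) (hb : SupportedOn b B) (hAB : Disjoint A B) :
    Commute a b := by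
  have hdisj : Equiv.Perm.Disjoint a.toEquiv b.toEquiv := fun x => by
    by_cases hx : x ∈ A
    · exact Or.inr (hb x (Set.disjoint_left.1 hAB hx))
    · exact Or.inl (ha x hx)
  exact Homeomorph.ext fun x => Equiv.ext_iff.1 hdisj.commute.eq x

theorem SupportedOn.conj (ha : SupportedOn a A) (b : X ≃ₜ X) :
    SupportedOn (b * a * b⁻¹) (b '' A) := fun x hx => by
  have hx' : b.symm x ∉ A := fun h => hx ⟨_, h, b.apply_symm_apply x⟩
  change b (a (b.symm x)) = x
  rw [ha _ hx', b.apply_symm_apply]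

end Homeomorph

namespace restrictedPi

variable {ι H M : Type*} [Group H] [Monoid M]

noncomputable def support (f : restrictedPi ι H) : Finset ι :=
  Set.Finite.toFinset (s := {i | (f : ι → H) i ≠ 1}) f.2

theorem mem_support {f : restrictedPi ι H} {i : ι} : i ∈ support f ↔ (f : ι → H) i ≠ 1 :=
  Set.Finite.mem_toFinset _

theorem support_subset_iff {f : restrictedPi ι H} {s : Finset ι} :
    support f ⊆ s ↔ ∀ i ∉ s, (f : ι → H) i = 1 := by
  simp only [Finset.subset_iff, mem_support]
  exact forall_congr' fun i => not_imp_comm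

section

variable (ψ : ι → H →* M) (hψ : Pairwise fun i j => ∀ a b, Commute (ψ i a) (ψ j b))
include hψ

theorem pairwise_commute_apply (f : ι → H) (s : Finset ι) :
    (s : Set ι).Pairwise (Commute on fun i => ψ i (f i)) :=
  fun _ _ _ _ hij => hψ hij _ _

theorem noncommProd_support_eq_of_subset (f : restrictedPi ι H) {s : Finset ι}
    (hs : support f ⊆ s) :
    (support f).noncommProd _ (pairwise_commute_apply ψ hψ f _) =
      s.noncommProd _ (pairwise_commute_apply ψ hψ f _) := by
  classical
  refine Finset.noncommProd_subset hs _ _ fun i _ hi => ?_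
  rw [of_not_not (mt mem_support.2 hi), map_one]

noncomputable def noncommCoprod : restrictedPi ι H →* M where
  toFun f := (support f).noncommProd _ (pairwise_commute_apply ψ hψ f _)
  map_one' := (Finset.noncommProd_eq_pow_card _ _ _ 1 fun i _ => map_one (ψ i)).trans (one_pow _)
  map_mul' f₁ f₂ := by
    classical
    set s := support f₁ ∪ support f₂
    have hmul : support (f₁ * f₂) ⊆ s := support_subset_iff.2 fun i hi => by
      simp only [s, Finset.mem_union, not_or, mem_support, not_not] at hi
      simp [hi.1, hi.2]
    rw [noncommProd_support_eq_of_subset ψ hψ _ hmul,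
      noncommProd_support_eq_of_subset ψ hψ f₁ Finset.subset_union_left,
      noncommProd_support_eq_of_subset ψ hψ f₂ Finset.subset_union_right]
    simp only [Subgroup.coe_mul, Pi.mul_apply, map_mul]
    exact Finset.noncommProd_mul_distrib _ _ _ _ fun _ _ _ _ hij => hψ hij _ _

theorem noncommCoprod_eq_noncommProd (f : restrictedPi ι H) {s : Finset ι} (hs : support f ⊆ s) :
    noncommCoprod ψ hψ f = s.noncommProd _ (pairwise_commute_apply ψ hψ f _) :=
  noncommProd_support_eq_of_subset ψ hψ f hs

theorem map_noncommCoprod {M' : Type*} [Monoid M'] (θ : M →* M') (f : restrictedPi ι H) :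
    θ (noncommCoprod ψ hψ f) =
      noncommCoprod (fun i => θ.comp (ψ i)) (fun _ _ hij a b => (hψ hij a b).map θ) f :=
  Finset.map_noncommProd _ _ (pairwise_commute_apply ψ hψ f _) θ

theorem noncommCoprod_congr {ψ' : ι → H →* M} (h : ∀ i, ψ i = ψ' i)
    (hψ' : Pairwise fun i j => ∀ a b, Commute (ψ' i a) (ψ' j b)) :
    noncommCoprod ψ hψ = noncommCoprod ψ' hψ' := by
  obtain rfl := funext h
  rfl

end

theorem restrictedLeftAut_apply {G H : Type*} [Group G] [Group H] (g : G)
    (f : restrictedPi G H) (x : G) :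
    ((restrictedLeftAut G H g f : restrictedPi G H) : G → H) x = (f : G → H) (g⁻¹ * x) :=
  rfl

theorem noncommCoprod_restrictedLeftAut {G H M : Type*} [Group G] [Group H]
    [Monoid M] (ψ : G → H →* M) (hψ : Pairwise fun i j => ∀ a b, Commute (ψ i a) (ψ j b))
    (g : G) (f : restrictedPi G H) :
    noncommCoprod ψ hψ (restrictedLeftAut G H g f) =
      noncommCoprod (fun i => ψ (g * i)) (fun _ _ hij => hψ ((mul_right_injective g).ne hij)) f := by
  classical
  have hs : support (restrictedLeftAut G H g f) ⊆ (support f).map (mulLeftEmbedding g) :=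
    support_subset_iff.2 fun i hi => of_not_not fun hne =>
      hi (Finset.mem_map.2 ⟨g⁻¹ * i, mem_support.2 hne, mul_inv_cancel_left g i⟩)
  rw [noncommCoprod_eq_noncommProd _ _ _ hs, Finset.noncommProd_map]
  refine Finset.noncommProd_congr rfl (fun i _ => ?_) _
  simp only [comp_apply, mulLeftEmbedding_apply, restrictedLeftAut_apply, inv_mul_cancel_left]

section

open Homeomorph

variable {ι X H : Type*} [TopologicalSpace X] [Group H] {K : Subgroup (X ≃ₜ X)}
  {ψ : ι → H →* K} {A : ι → Set X}

theorem pairwise_commute_of_supportedOn (hA : Pairwise (Disjoint on A))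
    (hψA : ∀ i h, SupportedOn (ψ i h) (A i)) :
    Pairwise fun i j => ∀ a b, Commute (ψ i a) (ψ j b) :=
  fun i j hij a b => Subtype.ext ((hψA i a).commute (hψA j b) (hA hij))

variable (hψ : Pairwise fun i j => ∀ a b, Commute (ψ i a) (ψ j b))
  (hA : Pairwise (Disjoint on A)) (hψA : ∀ i h, SupportedOn (ψ i h) (A i))
include hA hψA

theorem noncommCoprod_apply_of_mem (f : restrictedPi ι H) {i : ι} {x : X} (hx : x ∈ A i) :
    (noncommCoprod ψ hψ f : X ≃ₜ X) x = (ψ i ((f : ι → H) i) : X ≃ₜ X) x := by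
  classical
  have hi : i ∈ insert i (support f) := Finset.mem_insert_self _ _
  have hrest : ((((insert i (support f)).erase i).noncommProd (fun j => ψ j ((f : ι → H) j))
      (pairwise_commute_apply ψ hψ f _) : K) : X ≃ₜ X) x = x := by
    refine Finset.noncommProd_induction _ _ _ (fun k : K => (k : X ≃ₜ X) x = x)
      (fun k l hk hl => ?_) rfl fun j hj => hψA j _ x fun hxj => ?_
    · change (k : X ≃ₜ X) ((l : X ≃ₜ X) x) = x
      rw [hl, hk]
    · exact Set.disjoint_left.1 (hA (Finset.ne_of_mem_erase hj)) hxj hx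
  rw [noncommCoprod_eq_noncommProd ψ hψ f (Finset.subset_insert _ _),
    ← Finset.mul_noncommProd_erase _ hi]
  exact congrArg (ψ i ((f : ι → H) i) : X ≃ₜ X) hrest

theorem noncommCoprod_apply_mem (f : restrictedPi ι H) {i : ι} {x : X} (hx : x ∈ A i) :
    (noncommCoprod ψ hψ f : X ≃ₜ X) x ∈ A i :=
  noncommCoprod_apply_of_mem hψ hA hψA f hx ▸ (hψA i _).apply_mem hx

theorem noncommCoprod_injective (hinj : ∀ i, Injective (ψ i)) :
    Injective (noncommCoprod ψ hψ) := by
  refine (injective_iff_map_eq_one _).2 fun f hf => Subtype.ext <| funext fun i => ?_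
  suffices ψ i ((f : ι → H) i) = 1 from hinj i (this.trans (map_one _).symm)
  refine Subtype.ext <| Homeomorph.ext fun x => ?_
  by_cases hx : x ∈ A i
  · rw [← noncommCoprod_apply_of_mem hψ hA hψA f hx, hf]
  · exact hψA i _ x hx

end

end restrictedPi

section Demonstrative

open Homeomorph restrictedPi

variable {X G H : Type*} [TopologicalSpace X] [Group G] [Group H] {K : Subgroup (X ≃ₜ X)}
  (φ : G →* K) (ρ : H →* K)

def translateCopy (g : G) : H →* K := (MulAut.conj (φ g)).toMonoidHom.comp ρ

theorem translateCopy_injective (hρ : Injective ρ) (g : G) : Injective (translateCopy φ ρ g) :=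
  (MulAut.conj (φ g)).injective.comp hρ

theorem translateCopy_supportedOn {U : Set X} (hρU : ∀ h, SupportedOn (ρ h) U) (g : G) (h : H) :
    SupportedOn (translateCopy φ ρ g h) (⇑(φ g : X ≃ₜ X) '' U) :=
  (hρU h).conj _

theorem conj_comp_translateCopy (g g' : G) :
    (MulAut.conj (φ g)).toMonoidHom.comp (translateCopy φ ρ g') = translateCopy φ ρ (g * g') := by
  ext h
  simp [translateCopy, mul_assoc]

theorem conj_noncommCoprod_translateCopy
    (hψ : Pairwise fun i j => ∀ a b, Commute (translateCopy φ ρ i a) (translateCopy φ ρ j b))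
    (g : G) (f : restrictedPi G H) :
    φ g * noncommCoprod (translateCopy φ ρ) hψ f * (φ g)⁻¹ =
      noncommCoprod (translateCopy φ ρ) hψ (restrictedLeftAut G H g f) := by
  change (MulAut.conj (φ g)).toMonoidHom _ = _
  rw [map_noncommCoprod, noncommCoprod_restrictedLeftAut]
  exact DFunLike.congr_fun (noncommCoprod_congr _ _ (conj_comp_translateCopy φ ρ g) _) f

end Demonstrative

theorem wreath_embeds_of_demonstrative_copies_general {X : Type*} [TopologicalSpace X]
    (K : Subgroup (X ≃ₜ X)) {G H : Type*} [Group G] [Group H]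
    (φ : G →* K)
    (U : Set X) (hUopen : IsOpen U) (hUne : U.Nonempty)
    (hdem : ∀ g h : G, g ≠ h →
      Disjoint (⇑(φ g : X ≃ₜ X) '' U) (⇑(φ h : X ≃ₜ X) '' U))
    (hcopies : ∀ V : Set X, IsOpen V → V.Nonempty →
      ∃ ρ : H →* K, Function.Injective ρ ∧ ∀ h : H, ∀ x ∉ V, (ρ h : X ≃ₜ X) x = x) :
    ∃ ι : restrictedPi G H →* K, Function.Injective ι ∧
      (∀ g : G, ∀ f : restrictedPi G H,
        (φ g : K) * ι f * (φ g : K)⁻¹ = ι (restrictedLeftAut G H g f)) ∧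
      ∃ ψ : RestrictedWreath H G →* K, Function.Injective ψ := by
  obtain ⟨ρ, hρ, hρU⟩ := hcopies U hUopen hUne
  have hA : Pairwise (Disjoint on fun g : G => ⇑(φ g : X ≃ₜ X) '' U) := hdem
  have hψA := translateCopy_supportedOn φ ρ hρU
  have hψ := restrictedPi.pairwise_commute_of_supportedOn hA hψA
  let ι := restrictedPi.noncommCoprod (translateCopy φ ρ) hψ
  have hι : Injective ι :=
    restrictedPi.noncommCoprod_injective hψ hA hψA (translateCopy_injective φ ρ hρ)
  have hconj := conj_noncommCoprod_translateCopy φ ρ hψ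
  refine ⟨ι, hι, hconj, SemidirectProduct.lift ι φ
    (fun g => MonoidHom.ext fun f => (hconj g f).symm),
    SemidirectProduct.lift_injective _ _ _ hι fun f g hfg => of_not_not fun hg => ?_⟩
  obtain ⟨x, hx⟩ := hUne
  have hx1 : x ∈ ⇑(φ 1 : X ≃ₜ X) '' U := ⟨x, hx, by rw [map_one]; rfl⟩
  have hιx := restrictedPi.noncommCoprod_apply_mem hψ hA hψA f hx1
  rw [hfg] at hιx
  exact Set.disjoint_left.1 (hA hg) (Set.mem_image_of_mem _ hx) hιx

/-- If `G` acts demonstratively on `X` inside `K`, and `K` contains a copy of a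
fixed group `H` supported on every nonempty open set, then `⊕_{g ∈ G} H` embeds
into `K` with `G` normalizing the image and permuting the summands by left
translation; consequently `H ≀ G` embeds into `K`. -/
theorem wreath_embeds_of_demonstrative_copies {X : Type*} [TopologicalSpace X]
    (K : Subgroup (X ≃ₜ X)) {G H : Type*} [Group G] [Group H]
    (φ : G →* K) (hφ : Function.Injective φ)
    (U : Set X) (hUopen : IsOpen U) (hUne : U.Nonempty)
    (hdem : ∀ g h : G, g ≠ h →
      Disjoint (⇑(φ g : X ≃ₜ X) '' U) (⇑(φ h : X ≃ₜ X) '' U))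
    (hcopies : ∀ V : Set X, IsOpen V → V.Nonempty →
      ∃ ρ : H →* K, Function.Injective ρ ∧ ∀ h : H, ∀ x ∉ V, (ρ h : X ≃ₜ X) x = x) :
    ∃ ι : restrictedPi G H →* K, Function.Injective ι ∧
      (∀ g : G, ∀ f : restrictedPi G H,
        (φ g : K) * ι f * (φ g : K)⁻¹ = ι (restrictedLeftAut G H g f)) ∧
      ∃ ψ : RestrictedWreath H G →* K, Function.Injective ψ :=
  wreath_embeds_of_demonstrative_copies_general K φ U hUopen hUne hdem hcopies
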